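/- arXiv:1707.09657 — 4 statements merged into one kernel-verified Lean document; each statement's English description precedes it below -/
import Mathlib

section
/- For α ∈ ℝ with α ≠ 1, k ≥ 1, and positive reals r0,…,rk with r_{k-1} ≠ r_k, one has I_{α,k}(r0,…,rk) = (α-1)^{-1} (r_{k-1} - r_k)^{-1} [ I_{α-1,k-1}(r0,…,r_{k-2}, r_k) - I_{α-1,k-1}(r0,…,r_{k-1}) ]. -/
/-!
Slice `Δ_{k+1}` along its last coordinate: its points are `(u, t)` with `u ∈ Δ_k` and
`0 ≤ t ≤ u_k` (where `u_0 = 1`). For fixed `u` the integrand is `(A + t c)^{-α}`, with `A` the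
affine form of `(r_0, …, r_k)` at `u` and `c = r_{k+1} - r_k`; its integral in `t` is elementary,
and at the upper limit `t = u_k` the form `A + u_k c` is the one of `(r_0, …, r_{k-1}, r_{k+1})`.
-/

open MeasureTheory

/-- The standard simplex `Δ_k = {0 ≤ s_k ≤ … ≤ s_1 ≤ 1}` (indices `0,…,k-1`). -/
def simplexSet (k : ℕ) : Set (Fin k → ℝ) :=
  {s | (∀ i, 0 ≤ s i) ∧ (∀ i j : Fin k, i ≤ j → s j ≤ s i) ∧ (∀ i, s i ≤ 1)}

/-- `I_{α,k}(r_0,…,r_k) = ∫_{Δ_k} [r_0 + s_1(r_1-r_0) + … + s_k(r_k-r_{k-1})]^{-α} ds`. -/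
noncomputable def Ifun (α : ℝ) (k : ℕ) (r : Fin (k + 1) → ℝ) : ℝ :=
  ∫ s in simplexSet k,
    (r 0 + ∑ i : Fin k, s i * (r i.succ - r i.castSucc)) ^ (-α)

theorem mem_simplexSet_iff {m : ℕ} {s : Fin m → ℝ} :
    s ∈ simplexSet m ↔ (∀ i, 0 ≤ s i) ∧ Antitone s ∧ ∀ i, s i ≤ 1 :=
  Iff.rfl

/-- `u_m`, with the convention `u_0 = 1`: the last coordinate of a point of `Δ_{m+1}` lying over
`u ∈ Δ_m` ranges over `[0, lastCoord u]`. -/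
def lastCoord : {m : ℕ} → (Fin m → ℝ) → ℝ
  | 0, _ => 1
  | m + 1, u => u (Fin.last m)

theorem lastCoord_nonneg {m : ℕ} {u : Fin m → ℝ} (hu : u ∈ simplexSet m) :
    0 ≤ lastCoord u := by
  cases m with
  | zero => exact zero_le_one
  | succ j => exact hu.1 _

theorem snoc_mem_simplexSet_iff {m : ℕ} {u : Fin m → ℝ} {t : ℝ} :
    Fin.snoc u t ∈ simplexSet (m + 1) ↔
      u ∈ simplexSet m ∧ t ∈ Set.Icc 0 (lastCoord u) := by
  cases m with
  | zero =>
    simp [mem_simplexSet_iff, lastCoord, Subsingleton.antitone, Fin.snoc_zero]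
  | succ j =>
    simp only [mem_simplexSet_iff, Fin.antitone_iff_succ_le, Fin.forall_fin_succ',
      Fin.snoc_castSucc, Fin.snoc_last, Fin.succ_castSucc, Fin.succ_last, lastCoord, Set.mem_Icc]
    exact ⟨fun h => by tauto,
      fun h => ⟨by tauto, by tauto, by tauto, h.2.2.trans h.1.2.2.2⟩⟩

theorem isClosed_simplexSet (m : ℕ) : IsClosed (simplexSet m) := by
  simp only [simplexSet, Set.ofPred_and, Set.ofPred_forall]
  exact (isClosed_iInter fun i => isClosed_le continuous_const (continuous_apply i)).inter <|
    (isClosed_iInter fun i => isClosed_iInter fun j => isClosed_iInter fun _ =>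
      isClosed_le (continuous_apply j) (continuous_apply i)).inter <|
    isClosed_iInter fun i => isClosed_le (continuous_apply i) continuous_const

theorem isCompact_simplexSet (m : ℕ) : IsCompact (simplexSet m) :=
  (isCompact_Icc (a := 0) (b := 1)).of_isClosed_subset (isClosed_simplexSet m)
    fun _ hs => ⟨hs.1, hs.2.2⟩

theorem setIntegral_simplexSet_succ {E : Type*} [NormedAddCommGroup E] [NormedSpace ℝ E]
    {m : ℕ} {f : (Fin (m + 1) → ℝ) → E} (hf : IntegrableOn f (simplexSet (m + 1))) :
    ∫ s in simplexSet (m + 1), f s =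
      ∫ u in simplexSet m, ∫ t in (0 : ℝ)..lastCoord u, f (Fin.snoc u t) := by
  set e := (MeasurableEquiv.piFinSuccAbove (fun _ : Fin (m + 1) => ℝ) (Fin.last m)).symm
  have he : MeasurePreserving e (volume.prod volume) volume := by
    rw [← Measure.volume_eq_prod]
    exact (volume_preserving_piFinSuccAbove _ _).symm _
  have he_apply : ∀ p, e p = Fin.snoc p.2 p.1 := fun p => by
    simp [e, MeasurableEquiv.piFinSuccAbove_symm_apply, Fin.insertNthEquiv, Fin.insertNth_last']
  have hslice : ∀ u, ∫ t, (simplexSet (m + 1)).indicator f (Fin.snoc u t) =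
      (simplexSet m).indicator (fun u => ∫ t in (0 : ℝ)..lastCoord u, f (Fin.snoc u t)) u := by
    intro u
    by_cases hu : u ∈ simplexSet m
    · rw [Set.indicator_of_mem hu, intervalIntegral.integral_of_le (lastCoord_nonneg hu),
        ← integral_Icc_eq_integral_Ioc, ← integral_indicator measurableSet_Icc]
      congr with t
      simp only [Set.indicator, snoc_mem_simplexSet_iff, hu, true_and]
    · simp [Set.indicator, snoc_mem_simplexSet_iff, hu]
  have hS := (isClosed_simplexSet (m + 1)).measurableSet
  calc ∫ s in simplexSet (m + 1), f s = ∫ s, (simplexSet (m + 1)).indicator f s :=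
        (integral_indicator hS).symm
    _ = ∫ p, (simplexSet (m + 1)).indicator f (e p) ∂(volume.prod volume) :=
        (he.integral_comp' _).symm
    _ = ∫ u, ∫ t, (simplexSet (m + 1)).indicator f (Fin.snoc u t) := by
        simpa only [Function.comp_apply, he_apply] using integral_prod_symm _
          ((he.integrable_comp_emb e.measurableEmbedding).mpr (hf.integrable_indicator hS))
    _ = ∫ u in simplexSet m, ∫ t in (0 : ℝ)..lastCoord u, f (Fin.snoc u t) := by
        simp_rw [hslice]
        exact integral_indicator (isClosed_simplexSet m).measurableSet

/-- `(1 - s_1) r_0 + (s_1 - s_2) r_1 + … + s_m r_m`, summed by parts. -/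
def baryComb {m : ℕ} (r : Fin (m + 1) → ℝ) (s : Fin m → ℝ) : ℝ :=
  r 0 + ∑ i, s i * (r i.succ - r i.castSucc)

theorem Ifun_eq_setIntegral_baryComb (α : ℝ) (m : ℕ) (r : Fin (m + 1) → ℝ) :
    Ifun α m r = ∫ s in simplexSet m, baryComb r s ^ (-α) :=
  rfl

theorem continuous_baryComb {m : ℕ} (r : Fin (m + 1) → ℝ) : Continuous (baryComb r) := by
  unfold baryComb
  fun_prop

theorem baryComb_snoc {m : ℕ} (r : Fin (m + 2) → ℝ) (u : Fin m → ℝ) (t : ℝ) :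
    baryComb r (Fin.snoc u t) =
      baryComb (fun i => r i.castSucc) u +
        t * (r (Fin.last (m + 1)) - r (Fin.last m).castSucc) := by
  simp only [baryComb, Fin.sum_univ_castSucc, Fin.snoc_castSucc, Fin.snoc_last, Fin.succ_last,
    Fin.succ_castSucc, Fin.castSucc_zero, Nat.succ_eq_add_one, add_assoc]

theorem baryComb_update_last {m : ℕ} (b : Fin (m + 1) → ℝ) (x : ℝ) (u : Fin m → ℝ) :
    baryComb (Function.update b (Fin.last m) x) u =
      baryComb b u + lastCoord u * (x - b (Fin.last m)) := by
  cases m with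
  | zero => simp [baryComb, lastCoord]
  | succ j =>
    simp only [baryComb, lastCoord, Fin.sum_univ_castSucc, Fin.succ_castSucc, Fin.succ_last,
      Function.update_apply, Fin.castSucc_ne_last, Fin.last_pos.ne, if_false, if_true]
    ring

theorem add_mul_pos_of_mem_Icc {A b c t : ℝ} (hA : 0 < A) (hAb : 0 < A + b * c)
    (ht : t ∈ Set.Icc 0 b) : 0 < A + t * c := by
  rcases le_total 0 c with hc | hc <;> nlinarith [ht.1, ht.2]

theorem update_pos {ι β : Type*} [DecidableEq ι] [Zero β] [LT β] {f : ι → β}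
    (hf : ∀ i, 0 < f i) {a : ι} {x : β} (hx : 0 < x) (i : ι) : 0 < Function.update f a x i :=
  (Function.forall_update_iff f fun _ y => 0 < y).mpr ⟨hx, fun j _ => hf j⟩ i

theorem baryComb_pos {m : ℕ} {r : Fin (m + 1) → ℝ} (hr : ∀ i, 0 < r i) {s : Fin m → ℝ}
    (hs : s ∈ simplexSet m) : 0 < baryComb r s := by
  induction m with
  | zero => simpa [baryComb] using hr 0
  | succ j ih =>
    rw [← Fin.snoc_init_self s] at hs ⊢
    obtain ⟨hu, ht⟩ := snoc_mem_simplexSet_iff.mp hs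
    rw [baryComb_snoc]
    refine add_mul_pos_of_mem_Icc (ih (fun i => hr _) hu) ?_ ht
    rw [← baryComb_update_last]
    exact ih (update_pos (fun i => hr _) (hr _)) hu

theorem integrableOn_baryComb_rpow {m : ℕ} {r : Fin (m + 1) → ℝ} (hr : ∀ i, 0 < r i)
    (β : ℝ) :
    IntegrableOn (fun s => baryComb r s ^ (-β)) (simplexSet m) :=
  ((continuous_baryComb r).continuousOn.rpow_const fun _ hs =>
    Or.inl (baryComb_pos hr hs).ne').integrableOn_compact (isCompact_simplexSet m)

theorem integral_add_mul_rpow {A b c β : ℝ} (hc : c ≠ 0) (hβ : β ≠ 1) (hA : 0 < A)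
    (hAb : 0 < A + b * c) :
    ∫ t in (0 : ℝ)..b, (A + t * c) ^ (-β) =
      (A ^ (-(β - 1)) - (A + b * c) ^ (-(β - 1))) / ((β - 1) * c) := by
  have h0 : (0 : ℝ) ∉ Set.uIcc A (c * b + A) := fun h => by
    rcases Set.mem_uIcc.mp h with h | h <;> linarith [h.1, h.2]
  have hβ' : -β ≠ -1 := fun h => hβ (neg_inj.mp h)
  simp_rw [add_comm A, mul_comm _ c]
  rw [intervalIntegral.integral_comp_mul_add (fun x => x ^ (-β)) hc, mul_zero, zero_add,
    integral_rpow (Or.inr ⟨hβ', h0⟩), smul_eq_mul, show -β + 1 = -(β - 1) by ring]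
  field_simp
  ring

theorem Ifun_succ_eq_sub_div {α : ℝ} (hα : α ≠ 1) {k : ℕ} {r : Fin (k + 2) → ℝ}
    (hr : ∀ i, 0 < r i) (hc : r (Fin.last (k + 1)) - r (Fin.last k).castSucc ≠ 0) :
    Ifun α (k + 1) r =
      (Ifun (α - 1) k (fun i => r i.castSucc) -
          Ifun (α - 1) k
            (Function.update (fun i => r i.castSucc) (Fin.last k) (r (Fin.last (k + 1))))) /
        ((α - 1) * (r (Fin.last (k + 1)) - r (Fin.last k).castSucc)) := by
  set r' : Fin (k + 1) → ℝ := fun i => r i.castSucc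
  set r'' := Function.update r' (Fin.last k) (r (Fin.last (k + 1)))
  have hr' : ∀ i, 0 < r' i := fun i => hr _
  have hr'' : ∀ i, 0 < r'' i := update_pos hr' (hr _)
  rw [Ifun_eq_setIntegral_baryComb, setIntegral_simplexSet_succ (integrableOn_baryComb_rpow hr α),
    Ifun_eq_setIntegral_baryComb, Ifun_eq_setIntegral_baryComb, ← integral_sub
    (integrableOn_baryComb_rpow hr' _) (integrableOn_baryComb_rpow hr'' _), ← integral_div]
  refine setIntegral_congr_fun (isClosed_simplexSet k).measurableSet fun u hu => ?_
  have hend : baryComb r'' u = baryComb r' u + lastCoord u * _ := baryComb_update_last _ _ _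
  simp only [baryComb_snoc]
  rw [integral_add_mul_rpow hc hα (baryComb_pos hr' hu) (hend ▸ baryComb_pos hr'' hu), hend]

/-- Recursive formula for the universal spectral functions `I_{α,k}`. -/
theorem Ifun_recursion (α : ℝ) (hα : α ≠ 1) (k : ℕ) (r : Fin (k + 2) → ℝ)
    (hr : ∀ i, 0 < r i)
    (hne : r ⟨k, by omega⟩ ≠ r ⟨k + 1, by omega⟩) :
    Ifun α (k + 1) r =
      (α - 1)⁻¹ * (r ⟨k, by omega⟩ - r ⟨k + 1, by omega⟩)⁻¹ *
        (Ifun (α - 1) k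
            (fun i => if i = Fin.last k then r (Fin.last (k + 1)) else r i.castSucc) -
          Ifun (α - 1) k (fun i => r i.castSucc)) := by
  rw [show (⟨k, by omega⟩ : Fin (k + 2)) = (Fin.last k).castSucc from rfl,
    show (⟨k + 1, by omega⟩ : Fin (k + 2)) = Fin.last (k + 1) from rfl] at hne ⊢
  have hc := sub_ne_zero.mpr hne.symm
  have hupdate : (fun i => if i = Fin.last k then r (Fin.last (k + 1)) else r i.castSucc) =
      Function.update (fun i => r i.castSucc) (Fin.last k) (r (Fin.last (k + 1))) :=
    funext fun i => by rw [Function.update_apply]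
  rw [Ifun_succ_eq_sub_div hα hr hc, hupdate]
  have hα' : α - 1 ≠ 0 := sub_ne_zero.mpr hα
  have hc' := sub_ne_zero.mpr hne
  field_simp
  ring
end

section
/- Let u ∈ M_N(ℂ) be positive definite (hence invertible) and p ∈ M_N(ℂ). Then the Sylvester equation u·φ + φ·u = p has a unique solution φ ∈ M_N(ℂ), given by φ = (1/2) ∫_{-∞}^{∞} u^{it - 1/2} p u^{-it - 1/2} / cosh(πt) dt. -/
/-!
Conjugation by the eigenvector unitary `U` of `u` diagonalises the Sylvester operator
`φ ↦ uφ + φu`: in the eigenbasis it multiplies the `(k, l)` entry by `λₖ + λₗ > 0`, so the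
equation has exactly one solution, with entries `(U⋆pU)ₖₗ / (λₖ + λₗ)` in that basis.

The integral formula reduces, entrywise in the eigenbasis, to
`(1/2) ∫ a^(it-1/2) b^(-it-1/2) / cosh(πt) dt = 1 / (a + b)` for `a, b > 0`, i.e. to the
Fourier transform `∫ e^(iωt) / cosh(πt) dt = 1 / cosh(ω/2)`. The substitution
`x = sigmoid(2πt)` turns the latter into the Beta integral `B(s, 1 - s) = Γ(s) Γ(1 - s) =
π / sin(πs)` at `s = 1/2 + iω/(2π)`.
-/

open MeasureTheory Set Real

namespace Real

lemma one_sub_sigmoid (τ : ℝ) : 1 - sigmoid τ = (1 + rexp τ)⁻¹ := by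
  rw [← sigmoid_neg, sigmoid_def, neg_neg]

lemma sigmoid_eq_exp_mul_one_sub_sigmoid (τ : ℝ) : sigmoid τ = rexp τ * (1 - sigmoid τ) := by
  rw [← sigmoid_neg, ← sigmoid_mul_rexp_neg, mul_left_comm, ← exp_add, add_neg_cancel,
    exp_zero, mul_one]

lemma log_sigmoid (τ : ℝ) : log (sigmoid τ) = τ + log (1 - sigmoid τ) := by
  conv_lhs => rw [sigmoid_eq_exp_mul_one_sub_sigmoid]
  rw [log_mul (exp_pos τ).ne' (sub_pos.2 (sigmoid_lt_one τ)).ne', log_exp]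

end Real

lemma ofReal_cpow_of_pos {r : ℝ} (hr : 0 < r) (z : ℂ) :
    (r : ℂ) ^ z = Complex.exp (log r * z) := by
  rw [Complex.cpow_def_of_ne_zero (Complex.ofReal_ne_zero.2 hr.ne'), Complex.ofReal_log hr.le]

lemma ofReal_eq_cexp_log {r : ℝ} (hr : 0 < r) : (r : ℂ) = Complex.exp (log r) := by
  rw [← Complex.ofReal_exp, exp_log hr]

lemma abs_deriv_sigmoid_smul_betaIntegrand (s : ℂ) (τ : ℝ) :
    |sigmoid τ * (1 - sigmoid τ)| •
        ((sigmoid τ : ℂ) ^ (s - 1) * (1 - (sigmoid τ : ℂ)) ^ ((1 - s) - 1)) =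
      Complex.exp (s * τ) / (1 + rexp τ) := by
  have hσ := sigmoid_pos τ
  have hσ' : 0 < 1 - sigmoid τ := sub_pos.2 (sigmoid_lt_one τ)
  have hinv : (1 + rexp τ : ℂ)⁻¹ = (1 - sigmoid τ : ℝ) := by push_cast [one_sub_sigmoid]; rfl
  rw [abs_of_pos (mul_pos hσ hσ'), ← Complex.ofReal_one, ← Complex.ofReal_sub,
    ofReal_cpow_of_pos hσ, ofReal_cpow_of_pos hσ', Complex.real_smul, Complex.ofReal_one,
    div_eq_mul_inv, hinv, Complex.ofReal_mul, ofReal_eq_cexp_log hσ, ofReal_eq_cexp_log hσ',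
    ← Complex.exp_add, ← Complex.exp_add, ← Complex.exp_add, ← Complex.exp_add, log_sigmoid]
  congr 1
  push_cast
  ring

lemma betaIntegral_one_sub_eq_integral (s : ℂ) :
    Complex.betaIntegral s (1 - s) = ∫ τ : ℝ, Complex.exp (s * τ) / (1 + rexp τ) := by
  rw [Complex.betaIntegral, intervalIntegral.integral_of_le zero_le_one,
    integral_Ioc_eq_integral_Ioo, ← range_sigmoid, ← image_univ,
    integral_image_eq_integral_abs_deriv_smul MeasurableSet.univ
      (fun τ _ => (hasDerivAt_sigmoid τ).hasDerivWithinAt) sigmoid_injective.injOn,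
    Measure.restrict_univ]
  simp only [abs_deriv_sigmoid_smul_betaIntegrand]

lemma integrable_cexp_mul_div_one_add_exp {s : ℂ} (hs₀ : 0 < s.re) (hs₁ : s.re < 1) :
    Integrable fun τ : ℝ => Complex.exp (s * τ) / (1 + rexp τ) := by
  have h := (Complex.betaIntegral_convergent hs₀ (by simpa using hs₁ : 0 < (1 - s).re))
  rw [intervalIntegrable_iff_integrableOn_Ioo_of_le zero_le_one, ← range_sigmoid, ← image_univ,
    integrableOn_image_iff_integrableOn_abs_deriv_smul MeasurableSet.univ
      (fun τ _ => (hasDerivAt_sigmoid τ).hasDerivWithinAt) sigmoid_injective.injOn] at h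
  simpa only [abs_deriv_sigmoid_smul_betaIntegrand, integrableOn_univ] using h

lemma integral_cexp_mul_div_one_add_exp {s : ℂ} (hs₀ : 0 < s.re) (hs₁ : s.re < 1) :
    ∫ τ : ℝ, Complex.exp (s * τ) / (1 + rexp τ) = π / Complex.sin (π * s) := by
  rw [← betaIntegral_one_sub_eq_integral, ← Complex.Gamma_mul_Gamma_one_sub,
    Complex.Gamma_mul_Gamma_eq_betaIntegral hs₀ (by simpa using hs₁), add_sub_cancel,
    Complex.Gamma_one, one_mul]

lemma re_half_add_ofReal_mul_I (c : ℝ) : (1 / 2 + c * Complex.I).re = 1 / 2 := by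
  rw [Complex.add_re, Complex.re_ofReal_mul, Complex.I_re]; norm_num

lemma cexp_mul_div_cosh_eq (ω t : ℝ) :
    Complex.exp (Complex.I * ω * t) / (cosh (π * t) : ℂ) =
      2 * (Complex.exp ((1 / 2 + ↑(ω / (2 * π)) * Complex.I) * ↑(2 * π * t)) /
        (1 + rexp (2 * π * t))) := by
  have hsplit : (1 / 2 + ↑(ω / (2 * π)) * Complex.I) * ↑(2 * π * t) =
      ↑(π * t) + Complex.I * ω * t := by
    push_cast; field_simp
  rw [hsplit, Complex.exp_add, ← Complex.ofReal_exp, cosh_eq, exp_neg,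
    (by ring : 2 * π * t = π * t + π * t), exp_add]
  have hden : (1 + (rexp (π * t) : ℂ) * rexp (π * t)) ≠ 0 := by exact_mod_cast (by positivity)
  have hexp : (rexp (π * t) : ℂ) ≠ 0 := by exact_mod_cast (exp_pos _).ne'
  push_cast
  field_simp
  ring

lemma integrable_cexp_mul_div_cosh (ω : ℝ) :
    Integrable fun t : ℝ => Complex.exp (Complex.I * ω * t) / (cosh (π * t) : ℂ) := by
  simp_rw [cexp_mul_div_cosh_eq]
  refine ((integrable_cexp_mul_div_one_add_exp ?_ ?_).comp_mul_left' (by positivity)).const_mul 2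
  all_goals rw [re_half_add_ofReal_mul_I]; norm_num

lemma integral_cexp_mul_div_cosh (ω : ℝ) :
    ∫ t : ℝ, Complex.exp (Complex.I * ω * t) / (cosh (π * t) : ℂ) =
      1 / (cosh (ω / 2) : ℂ) := by
  have hsin : Complex.sin (π * (1 / 2 + ↑(ω / (2 * π)) * Complex.I)) = cosh (ω / 2) := by
    rw [(by push_cast; field_simp; ring : (π : ℂ) * (1 / 2 + ↑(ω / (2 * π)) * Complex.I) =
      ↑(ω / 2) * Complex.I + π / 2), Complex.sin_add_pi_div_two, Complex.cos_mul_I,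
      Complex.ofReal_cosh]
  simp_rw [cexp_mul_div_cosh_eq]
  rw [integral_const_mul, Measure.integral_comp_mul_left
      (fun τ : ℝ => Complex.exp ((1 / 2 + ↑(ω / (2 * π)) * Complex.I) * τ) / (1 + rexp τ)),
    integral_cexp_mul_div_one_add_exp (by rw [re_half_add_ofReal_mul_I]; norm_num)
      (by rw [re_half_add_ofReal_mul_I]; norm_num), hsin,
    abs_of_pos (by positivity), Complex.real_smul]
  have hcosh : (cosh (ω / 2) : ℂ) ≠ 0 := Complex.ofReal_ne_zero.2 (cosh_pos _).ne'
  push_cast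
  field_simp

lemma exp_neg_half_add_div_cosh_half_sub (α β : ℝ) :
    rexp (-(α + β) / 2) / cosh ((α - β) / 2) = 2 / (rexp α + rexp β) := by
  have hsum : rexp α + rexp β =
      rexp ((α + β) / 2) * (rexp ((α - β) / 2) + rexp (-((α - β) / 2))) := by
    rw [mul_add, ← exp_add, ← exp_add]; ring_nf
  rw [cosh_eq, hsum]
  have hpos : 0 < rexp ((α - β) / 2) + rexp (-((α - β) / 2)) := by positivity
  field_simp
  rw [← exp_add, neg_add_cancel, exp_zero]

lemma cpow_mul_cpow_div_cosh_eq {a b : ℝ} (ha : 0 < a) (hb : 0 < b) (t : ℝ) :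
    (a : ℂ) ^ (Complex.I * t - 1 / 2) * (b : ℂ) ^ (-(Complex.I * t) - 1 / 2) /
        (cosh (π * t) : ℂ) =
      rexp (-(log a + log b) / 2) *
        (Complex.exp (Complex.I * ↑(log a - log b) * t) / (cosh (π * t) : ℂ)) := by
  rw [ofReal_cpow_of_pos ha, ofReal_cpow_of_pos hb, ← Complex.exp_add, Complex.ofReal_exp,
    mul_div_assoc', ← Complex.exp_add]
  congr 2
  push_cast
  ring

lemma integrable_cpow_mul_cpow_div_cosh {a b : ℝ} (ha : 0 < a) (hb : 0 < b) :
    Integrable fun t : ℝ =>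
      (a : ℂ) ^ (Complex.I * t - 1 / 2) * (b : ℂ) ^ (-(Complex.I * t) - 1 / 2) /
        (cosh (π * t) : ℂ) := by
  simp_rw [cpow_mul_cpow_div_cosh_eq ha hb]
  exact (integrable_cexp_mul_div_cosh _).const_mul _

lemma integral_cpow_mul_cpow_div_cosh {a b : ℝ} (ha : 0 < a) (hb : 0 < b) :
    ∫ t : ℝ, (a : ℂ) ^ (Complex.I * t - 1 / 2) * (b : ℂ) ^ (-(Complex.I * t) - 1 / 2) /
        (cosh (π * t) : ℂ) = 2 / (a + b) := by
  simp_rw [cpow_mul_cpow_div_cosh_eq ha hb]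
  rw [integral_const_mul, integral_cexp_mul_div_cosh, mul_one_div, ← Complex.ofReal_div,
    exp_neg_half_add_div_cosh_half_sub, exp_log ha, exp_log hb]
  push_cast; rfl

open Matrix Unitary

theorem Matrix.diagonal_mul_add_mul_diagonal_eq_iff {n K : Type*} [Fintype n] [DecidableEq n]
    [Field K] {d : n → K} (hd : ∀ k l, d k + d l ≠ 0) {X Q : Matrix n n K} :
    diagonal d * X + X * diagonal d = Q ↔ X = of fun k l => Q k l / (d k + d l) := by
  simp only [← Matrix.ext_iff, add_apply, diagonal_mul, mul_diagonal, of_apply]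
  refine forall₂_congr fun k l => ?_
  rw [eq_div_iff (hd k l)]
  constructor <;> intro h <;> linear_combination h

theorem Matrix.IsHermitian.mul_add_mul_eq_iff {n 𝕜 : Type*} [Fintype n] [DecidableEq n]
    [RCLike 𝕜] {A X Q : Matrix n n 𝕜} (hA : A.IsHermitian)
    (h : ∀ k l, hA.eigenvalues k + hA.eigenvalues l ≠ 0) :
    A * X + X * A = Q ↔
      X = conjStarAlgAut 𝕜 _ hA.eigenvectorUnitary (of fun k l =>
        (star (hA.eigenvectorUnitary : Matrix n n 𝕜) * Q * hA.eigenvectorUnitary) k l /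
          (hA.eigenvalues k + hA.eigenvalues l : 𝕜)) := by
  set f := conjStarAlgAut 𝕜 _ hA.eigenvectorUnitary
  have hd : ∀ k l,
      (RCLike.ofReal ∘ hA.eigenvalues) k + (RCLike.ofReal ∘ hA.eigenvalues) l ≠ (0 : 𝕜) :=
    fun k l => by
      simpa only [Function.comp_apply, ← RCLike.ofReal_add, RCLike.ofReal_ne_zero] using h k l
  conv_lhs => rw [hA.spectral_theorem, ← f.apply_symm_apply X, ← f.apply_symm_apply Q,
    ← map_mul, ← map_mul, ← map_add, EmbeddingLike.apply_eq_iff_eq,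
    diagonal_mul_add_mul_diagonal_eq_iff hd]
  exact f.symm_apply_eq

theorem Matrix.integral_mul_mul_apply {α m n o p 𝕜 : Type*} [MeasurableSpace α]
    {μ : Measure α} [Fintype n] [Fintype o] [RCLike 𝕜] (A : Matrix m n 𝕜)
    (M : α → Matrix n o 𝕜) (B : Matrix o p 𝕜) (hM : ∀ k l, Integrable (fun t => M t k l) μ)
    (i : m) (j : p) :
    ∫ t, (A * M t * B) i j ∂μ = (A * of (fun k l => ∫ t, M t k l ∂μ) * B) i j := by
  have hAM : ∀ l, Integrable (fun t => (A * M t) i l) μ := fun l =>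
    integrable_finsetSum _ fun k _ => (hM k l).const_mul _
  have hsplit : ∀ t, (A * M t * B) i j = ∑ l, (A * M t) i l * B l j := fun t => mul_apply
  simp only [hsplit]
  rw [integral_finsetSum _ fun l _ => (hAM l).mul_const _, mul_apply]
  refine Finset.sum_congr rfl fun l _ => ?_
  simp only [integral_mul_const, mul_apply, of_apply]
  rw [integral_finsetSum _ fun k _ => (hM k l).const_mul _]
  simp only [integral_const_mul]

theorem Matrix.half_integral_cpow_sandwich_div_cosh {n : Type*} [Fintype n] [DecidableEq n]
    (V W P : Matrix n n ℂ) {ev : n → ℝ} (hev : ∀ k, 0 < ev k) (i j : n) :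
    (1 / 2 : ℂ) * ∫ t : ℝ,
        (V * diagonal (fun k => (ev k : ℂ) ^ (Complex.I * t - 1 / 2)) * W * P *
          (V * diagonal (fun k => (ev k : ℂ) ^ (-(Complex.I * t) - 1 / 2)) * W)) i j /
            (cosh (π * t) : ℂ) =
      (V * (of fun k l => (W * P * V) k l / (ev k + ev l : ℂ)) * W) i j := by
  set Q := W * P * V
  let K : ℝ → Matrix n n ℂ := fun t => of fun k l => Q k l *
    ((ev k : ℂ) ^ (Complex.I * t - 1 / 2) * (ev l : ℂ) ^ (-(Complex.I * t) - 1 / 2) /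
      (cosh (π * t) : ℂ))
  have hK : ∀ t : ℝ,
      (V * diagonal (fun k => (ev k : ℂ) ^ (Complex.I * t - 1 / 2)) * W * P *
          (V * diagonal (fun k => (ev k : ℂ) ^ (-(Complex.I * t) - 1 / 2)) * W)) i j /
        (cosh (π * t) : ℂ) = (V * K t * W) i j := by
    intro t
    have hcosh : (cosh (π * t) : ℂ) ≠ 0 := Complex.ofReal_ne_zero.2 (cosh_pos _).ne'
    have hdiag : diagonal (fun k => (ev k : ℂ) ^ (Complex.I * t - 1 / 2)) * Q *
        diagonal (fun l => (ev l : ℂ) ^ (-(Complex.I * t) - 1 / 2)) =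
          (cosh (π * t) : ℂ) • K t := by
      ext k l
      simp only [K, Matrix.smul_apply, of_apply, diagonal_mul, mul_diagonal, smul_eq_mul]
      field_simp
    have hsandwich : V * diagonal (fun k => (ev k : ℂ) ^ (Complex.I * t - 1 / 2)) * W * P *
        (V * diagonal (fun k => (ev k : ℂ) ^ (-(Complex.I * t) - 1 / 2)) * W) =
          V * ((cosh (π * t) : ℂ) • K t) * W := by
      simp only [← hdiag, Q, Matrix.mul_assoc]
    simp only [hsandwich, Matrix.mul_smul, Matrix.smul_mul, Matrix.smul_apply, smul_eq_mul,
      mul_div_cancel_left₀ _ hcosh]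
  have hKint : ∀ k l, Integrable fun t => K t k l := fun k l =>
    (integrable_cpow_mul_cpow_div_cosh (hev k) (hev l)).const_mul _
  have hKint_eq :
      (of fun k l => ∫ t, K t k l) = (2 : ℂ) • of fun k l => Q k l / (ev k + ev l : ℂ) := by
    ext k l
    simp only [K, of_apply, Matrix.smul_apply, smul_eq_mul, integral_const_mul,
      integral_cpow_mul_cpow_div_cosh (hev k) (hev l)]
    ring
  simp only [hK, integral_mul_mul_apply _ K _ hKint, hKint_eq, Matrix.mul_smul, Matrix.smul_mul,
    Matrix.smul_apply, smul_eq_mul]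
  ring

open scoped ComplexOrder

/-- For `u` positive definite, the Sylvester equation `uφ + φu = p` has a unique solution,
given by `φ = (1/2)∫_{-∞}^∞ u^{it-1/2} p u^{-it-1/2} / cosh(πt) dt`. -/
theorem sylvester_unique_solution {N : ℕ} (u p : Matrix (Fin N) (Fin N) ℂ)
    (hu : u.PosDef) :
    -- complex powers of `u` via its spectral decomposition
    let upow : ℂ → Matrix (Fin N) (Fin N) ℂ := fun z =>
      (hu.isHermitian.eigenvectorUnitary : Matrix (Fin N) (Fin N) ℂ) *
        Matrix.diagonal (fun i => (hu.isHermitian.eigenvalues i : ℂ) ^ z) *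
        star (hu.isHermitian.eigenvectorUnitary : Matrix (Fin N) (Fin N) ℂ)
    -- the candidate solution, defined entrywise by a Bochner integral in `ℂ`
    let Φ : Matrix (Fin N) (Fin N) ℂ := Matrix.of fun i j =>
      (1 / 2 : ℂ) * ∫ t : ℝ,
        (upow (Complex.I * t - 1 / 2) * p * upow (-(Complex.I * t) - 1 / 2)) i j /
          (Real.cosh (Real.pi * t) : ℂ)
    (u * Φ + Φ * u = p) ∧ ∀ φ : Matrix (Fin N) (Fin N) ℂ, u * φ + φ * u = p → φ = Φ := by
  intro upow Φ
  set U := hu.isHermitian.eigenvectorUnitary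
  set Ψ : Matrix (Fin N) (Fin N) ℂ := of fun k l =>
    (star (U : Matrix (Fin N) (Fin N) ℂ) * p * U) k l /
      (hu.isHermitian.eigenvalues k + hu.isHermitian.eigenvalues l : ℂ)
  have hsolve : ∀ φ, u * φ + φ * u = p ↔ φ = conjStarAlgAut ℂ _ U Ψ := fun φ =>
    hu.isHermitian.mul_add_mul_eq_iff fun k l =>
      (add_pos (hu.eigenvalues_pos k) (hu.eigenvalues_pos l)).ne'
  have hΦ : Φ = conjStarAlgAut ℂ _ U Ψ := by
    ext i j
    exact half_integral_cpow_sandwich_div_cosh _ _ p hu.eigenvalues_pos i j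
  exact ⟨(hsolve Φ).2 hΦ, fun φ hφ => ((hsolve φ).1 hφ).trans hΦ.symm⟩
end

section
/- (Rearrangement lemma, case p=2) Let u ∈ M_N(ℂ) be positive definite with spectral projections E_r, and let F : (0,∞)³ → ℂ. Then for all b0, b1, b2 ∈ M_N(ℂ): ∑_{r0,r1,r2 ∈ spec(u)} F(r0,r1,r2) b0 E_{r0} b1 E_{r1} b2 E_{r2} = ∑_{r0 ∈ spec(u), y1, y2 ∈ spec(Δ)} F(r0, r0 y1, r0 y1 y2) b0 E_{r0} E_{y1}^Δ(b1) E_{y2}^Δ(b2), where E_y^Δ(a) = ∑_{z} E_z a E_{yz}. -/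
open Matrix

/-! For fixed `r₀`, the idempotent `E r₀` collapses each spectral projection `E_y^Δ(b) = ∑_z E_z b E_{yz}`
to the single term with `z` the current spectral value, so the right-hand side becomes a sum of
`F r₀ (r₀ y₁) (r₀ y₁ y₂) • b₀ E_{r₀} b₁ E_{r₀ y₁} b₂ E_{r₀ y₁ y₂}`. The substitutions `r₁ = r₀ y₁`,
`r₂ = r₁ y₂` then turn the sums over `spec Δ` into sums over `spec u`: every `r ∈ spec u` is hit once
as `s y` with `y = s⁻¹ r`, and terms with `s y ∉ spec u` vanish because `E` does. -/

section OrthogonalIdempotents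

variable {ι R : Type*} [DecidableEq ι] [NonUnitalSemiring R]

theorem mul_proj_mul_sum_proj_mul_proj {S : Finset ι} {E : ι → R}
    (hE0 : ∀ i ∉ S, E i = 0) (horth : ∀ i j, E i * E j = if i = j then E i else 0)
    (f : ι → ι) (a b : R) (s : ι) :
    a * E s * ∑ z ∈ S, E z * b * E (f z) = a * E s * b * E (f s) := by
  simp_rw [Finset.mul_sum, ← mul_assoc, mul_assoc a, horth, ite_mul, mul_ite, zero_mul, mul_zero]
  rw [Finset.sum_ite_eq]
  split_ifs with hs
  · rfl
  · simp [hE0 s hs]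

end OrthogonalIdempotents

section RatioSet

variable {K M : Type*} [CommGroupWithZero K] [DecidableEq K] [AddCommMonoid M]

theorem sum_image_inv_mul_comp_mul {S : Finset K} {s : K} (hs : s ∈ S) (hs0 : s ≠ 0)
    {g : K → M} (hg : ∀ r ∉ S, g r = 0) :
    ∑ y ∈ (S ×ˢ S).image (fun p => p.1⁻¹ * p.2), g (s * y) = ∑ r ∈ S, g r := by
  have hsub : S.image (s⁻¹ * ·) ⊆ (S ×ˢ S).image (fun p => p.1⁻¹ * p.2) :=
    Finset.image_subset_iff.mpr fun r hr => Finset.mem_image_of_mem _ (Finset.mk_mem_product hs hr)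
  rw [← Finset.sum_subset hsub, Finset.sum_image]
  · simp [mul_inv_cancel_left₀ hs0]
  · intro r _ r' _ h
    exact mul_left_cancel₀ (inv_ne_zero hs0) h
  · intro y _ hy
    refine hg _ fun hsy => hy (Finset.mem_image.mpr ⟨s * y, hsy, ?_⟩)
    simp [inv_mul_cancel_left₀ hs0]

theorem sum_image_inv_mul_sum_image_inv_mul {S : Finset K} (hS : ∀ r ∈ S, r ≠ 0)
    {s : K} (hs : s ∈ S) {G : K → K → M} (hG : ∀ r₁ r₂, r₁ ∉ S ∨ r₂ ∉ S → G r₁ r₂ = 0) :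
    ∑ y₁ ∈ (S ×ˢ S).image (fun p => p.1⁻¹ * p.2), ∑ y₂ ∈ (S ×ˢ S).image (fun p => p.1⁻¹ * p.2),
        G (s * y₁) (s * y₁ * y₂) =
      ∑ r₁ ∈ S, ∑ r₂ ∈ S, G r₁ r₂ := by
  rw [sum_image_inv_mul_comp_mul hs (hS s hs)
    (g := fun r₁ => ∑ y₂ ∈ (S ×ˢ S).image (fun p => p.1⁻¹ * p.2), G r₁ (r₁ * y₂))]
  · exact Finset.sum_congr rfl fun r₁ hr₁ =>
      sum_image_inv_mul_comp_mul hr₁ (hS r₁ hr₁) fun r₂ hr₂ => hG _ _ (Or.inr hr₂)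
  · exact fun r₁ hr₁ => Finset.sum_eq_zero fun _ _ => hG _ _ (Or.inl hr₁)

end RatioSet

theorem rearrangement_lemma_p2_general {N : ℕ}
    (S : Finset ℝ) (hSpos : ∀ r ∈ S, 0 < r)
    (E : ℝ → Matrix (Fin N) (Fin N) ℂ)
    (hE0 : ∀ r ∉ S, E r = 0)
    (horth : ∀ r r' : ℝ, E r * E r' = if r = r' then E r else 0)
    (F : ℝ → ℝ → ℝ → ℂ)
    (b0 b1 b2 : Matrix (Fin N) (Fin N) ℂ) :
    ∑ r0 ∈ S, ∑ r1 ∈ S, ∑ r2 ∈ S,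
        F r0 r1 r2 • (b0 * E r0 * b1 * E r1 * b2 * E r2) =
      ∑ r0 ∈ S,
        ∑ y1 ∈ Finset.image (fun pr : ℝ × ℝ => pr.1⁻¹ * pr.2) (S ×ˢ S),
          ∑ y2 ∈ Finset.image (fun pr : ℝ × ℝ => pr.1⁻¹ * pr.2) (S ×ˢ S),
            F r0 (r0 * y1) (r0 * y1 * y2) •
              (b0 * E r0 * (∑ z ∈ S, E z * b1 * E (y1 * z)) *
                (∑ z ∈ S, E z * b2 * E (y2 * z))) := by
  refine Finset.sum_congr rfl fun r0 hr0 => ?_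
  rw [← sum_image_inv_mul_sum_image_inv_mul (fun r hr => (hSpos r hr).ne') hr0
    (G := fun r1 r2 => F r0 r1 r2 • (b0 * E r0 * b1 * E r1 * b2 * E r2))]
  · refine Finset.sum_congr rfl fun y1 _ => Finset.sum_congr rfl fun y2 _ => ?_
    rw [mul_proj_mul_sum_proj_mul_proj hE0 horth, mul_proj_mul_sum_proj_mul_proj hE0 horth,
      mul_comm y1 r0, mul_comm y2]
  · rintro r1 r2 (h | h) <;> simp [hE0 _ h]

/-- Rearrangement lemma (case `p = 2`): functional calculus in the right multiplications
`R_u` rewritten as functional calculus in the modular operator `Δ`, whose spectrum is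
`T = {r0⁻¹ r1 : r0, r1 ∈ spec u}` and whose spectral projections are
`E_y^Δ(b) = ∑_z E_z b E_{yz}`. -/
theorem rearrangement_lemma_p2 {N : ℕ}
    (S : Finset ℝ) (hSpos : ∀ r ∈ S, 0 < r)
    (E : ℝ → Matrix (Fin N) (Fin N) ℂ)
    (hE0 : ∀ r ∉ S, E r = 0)
    (hsum : ∑ r ∈ S, E r = 1)
    (horth : ∀ r r' : ℝ, E r * E r' = if r = r' then E r else 0)
    (u : Matrix (Fin N) (Fin N) ℂ)
    (hu : u = ∑ r ∈ S, (r : ℂ) • E r)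
    (F : ℝ → ℝ → ℝ → ℂ)
    (b0 b1 b2 : Matrix (Fin N) (Fin N) ℂ) :
    ∑ r0 ∈ S, ∑ r1 ∈ S, ∑ r2 ∈ S,
        F r0 r1 r2 • (b0 * E r0 * b1 * E r1 * b2 * E r2) =
      ∑ r0 ∈ S,
        ∑ y1 ∈ Finset.image (fun pr : ℝ × ℝ => pr.1⁻¹ * pr.2) (S ×ˢ S),
          ∑ y2 ∈ Finset.image (fun pr : ℝ × ℝ => pr.1⁻¹ * pr.2) (S ×ˢ S),
            F r0 (r0 * y1) (r0 * y1 * y2) •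
              (b0 * E r0 * (∑ z ∈ S, E z * b1 * E (y1 * z)) *
                (∑ z ∈ S, E z * b2 * E (y2 * z))) :=
  rearrangement_lemma_p2_general S hSpos E hE0 horth F b0 b1 b2
end

section
/- The function g_2(y1,y2) := (1/4)∫_0^1∫_0^{1-s1} y1^{(s1+s2)/2} y2^{s1/2} ds2 ds1 + (1/4)∫_0^1∫_0^{s1} y1^{s1/2} y2^{s2/2} ds2 ds1 equals 2·(√y1(√y2 − 1)ln y1 − (√y1 − 1)ln y2)/(ln y1 · ln y2 · (ln y1 + ln y2)) for y1, y2 > 0 with y1, y2, y1·y2 ≠ 1. -/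
/-!
Writing `y ^ (s / 2) = exp (a s)` with `a = log y / 2`, both integrands become products of
exponentials in `s₁` and `s₂`, so the iterated integrals over the two triangles are elementary.
-/

open Real intervalIntegral

theorem integral_exp_const_mul {c : ℝ} (hc : c ≠ 0) (a b : ℝ) :
    ∫ x in a..b, exp (c * x) = (exp (c * b) - exp (c * a)) / c := by
  rw [integral_comp_mul_left exp hc, integral_exp, smul_eq_mul, inv_mul_eq_div]

theorem intervalIntegrable_exp_const_mul (c a b : ℝ) :
    IntervalIntegrable (fun x => exp (c * x)) MeasureTheory.volume a b :=
  (by fun_prop : Continuous fun x => exp (c * x)).intervalIntegrable a b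

theorem rpow_div_two_eq_exp {y : ℝ} (hy : 0 < y) (x : ℝ) : y ^ (x / 2) = exp (log y / 2 * x) := by
  rw [rpow_def_of_pos hy]
  ring_nf

theorem sqrt_eq_exp_log_div_two {y : ℝ} (hy : 0 < y) : √y = exp (log y / 2) := by
  rw [sqrt_eq_rpow, rpow_div_two_eq_exp hy 1, mul_one]

theorem integral_integral_exp_upper_triangle {a b : ℝ} (ha : a ≠ 0) (hb : b ≠ 0)
    (hab : a + b ≠ 0) :
    ∫ s in (0:ℝ)..1, ∫ t in (0:ℝ)..(1 - s), exp (a * (s + t)) * exp (b * s) =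
      (exp a * ((exp b - 1) / b) - (exp (a + b) - 1) / (a + b)) / a := by
  have inner (s : ℝ) : ∫ t in (0:ℝ)..(1 - s), exp (a * (s + t)) * exp (b * s) =
      (exp a * exp (b * s) - exp ((a + b) * s)) / a := by
    have split (t : ℝ) : exp (a * (s + t)) * exp (b * s) = exp ((a + b) * s) * exp (a * t) := by
      rw [← exp_add, ← exp_add]; ring_nf
    have shift : exp ((a + b) * s) * exp (a * (1 - s)) = exp a * exp (b * s) := by
      rw [← exp_add, ← exp_add]; ring_nf
    simp_rw [split, integral_const_mul, integral_exp_const_mul ha, mul_zero, exp_zero]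
    rw [mul_div_assoc', mul_sub, shift, mul_one]
  simp_rw [inner, integral_div]
  rw [integral_sub ((intervalIntegrable_exp_const_mul _ _ _).const_mul _)
      (intervalIntegrable_exp_const_mul _ _ _), integral_const_mul,
    integral_exp_const_mul hb, integral_exp_const_mul hab]
  simp only [mul_one, mul_zero, exp_zero]

theorem integral_integral_exp_lower_triangle {a b : ℝ} (ha : a ≠ 0) (hb : b ≠ 0)
    (hab : a + b ≠ 0) :
    ∫ s in (0:ℝ)..1, ∫ t in (0:ℝ)..s, exp (a * s) * exp (b * t) =
      ((exp (a + b) - 1) / (a + b) - (exp a - 1) / a) / b := by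
  have inner (s : ℝ) : ∫ t in (0:ℝ)..s, exp (a * s) * exp (b * t) =
      (exp ((a + b) * s) - exp (a * s)) / b := by
    have merge : exp (a * s) * exp (b * s) = exp ((a + b) * s) := by
      rw [← exp_add]; ring_nf
    simp_rw [integral_const_mul, integral_exp_const_mul hb, mul_zero, exp_zero,
      mul_div_assoc', mul_sub, merge, mul_one]
  simp_rw [inner, integral_div]
  rw [integral_sub (intervalIntegrable_exp_const_mul _ _ _)
      (intervalIntegrable_exp_const_mul _ _ _),
    integral_exp_const_mul hab, integral_exp_const_mul ha]
  simp only [mul_one, mul_zero, exp_zero]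

/-- Explicit evaluation of
`g₂(y₁,y₂) = (1/4)∫_0^1∫_0^{1-s₁} y₁^{(s₁+s₂)/2} y₂^{s₁/2} + (1/4)∫_0^1∫_0^{s₁} y₁^{s₁/2} y₂^{s₂/2}`. -/
theorem g_two_eval (y1 y2 : ℝ) (h1 : 0 < y1) (h2 : 0 < y2)
    (h1' : y1 ≠ 1) (h2' : y2 ≠ 1) (h12 : y1 * y2 ≠ 1) :
    (1 / 4 : ℝ) * (∫ s1 in (0:ℝ)..1, ∫ s2 in (0:ℝ)..(1 - s1),
        y1 ^ ((s1 + s2) / 2) * y2 ^ (s1 / 2)) +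
      (1 / 4 : ℝ) * (∫ s1 in (0:ℝ)..1, ∫ s2 in (0:ℝ)..s1,
        y1 ^ (s1 / 2) * y2 ^ (s2 / 2)) =
      2 * (Real.sqrt y1 * (Real.sqrt y2 - 1) * Real.log y1 -
          (Real.sqrt y1 - 1) * Real.log y2) /
        (Real.log y1 * Real.log y2 * (Real.log y1 + Real.log y2)) := by
  have hL1 : log y1 ≠ 0 := log_ne_zero_of_pos_of_ne_one h1 h1'
  have hL2 : log y2 ≠ 0 := log_ne_zero_of_pos_of_ne_one h2 h2'
  have hL12 : log y1 + log y2 ≠ 0 := by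
    rw [← log_mul h1.ne' h2.ne']
    exact log_ne_zero_of_pos_of_ne_one (mul_pos h1 h2) h12
  have ha : log y1 / 2 ≠ 0 := by positivity
  have hb : log y2 / 2 ≠ 0 := by positivity
  have hab : log y1 / 2 + log y2 / 2 ≠ 0 := by rw [← add_div]; positivity
  simp_rw [rpow_div_two_eq_exp h1, rpow_div_two_eq_exp h2]
  rw [integral_integral_exp_upper_triangle ha hb hab,
    integral_integral_exp_lower_triangle ha hb hab,
    sqrt_eq_exp_log_div_two h1, sqrt_eq_exp_log_div_two h2, exp_add]
  field_simp
  ring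
end
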